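/- arXiv:0908.2964 — 5 statements merged into one kernel-verified Lean document; each statement's English description precedes it below -/
import Mathlib

section
/- The function F_N is jointly concave: for density matrices ρ₁, ρ₂, σ₁, σ₂ and p₁, p₂ ≥ 0 with p₁ + p₂ = 1, one has F_N(p₁ρ₁ + p₂ρ₂, p₁σ₁ + p₂σ₂) ≥ p₁·F_N(ρ₁,σ₁) + p₂·F_N(ρ₂,σ₂). -/
open Matrix BigOperators ComplexOrder

/-- A density matrix: positive semidefinite with unit trace. -/
def IsDensity {n : Type*} [Fintype n] (ρ : Matrix n n ℂ) : Prop :=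
  ρ.PosSemidef ∧ ρ.trace = 1

/-- The alternative fidelity `F_N(ρ,σ) = tr(ρσ) + √(1 - tr ρ²)·√(1 - tr σ²)`. -/
noncomputable def FN {n : Type*} [Fintype n] (ρ σ : Matrix n n ℂ) : ℝ :=
  (ρ * σ).trace.re
    + Real.sqrt (1 - (ρ * ρ).trace.re) * Real.sqrt (1 - (σ * σ).trace.re)

/-!
On Hermitian matrices `re tr(ρσ)` is the real part of the Frobenius inner product, so `F_N` is an
instance of `F(x, y) = B x y + √(1 - B x x) √(1 - B y y)` for a positive semidefinite symmetric
bilinear form `B`, on the unit ball `B x x ≤ 1` (density matrices lie in it since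
`tr ρ² = ∑ λᵢ² ≤ (∑ λᵢ)² = 1`).
The lift `x ↦ (x, √(1 - B x x))` maps the ball to the unit sphere of `B ⊕ (· * ·)` on `M × ℝ`,
where `F` is the form itself. For unit vectors `uᵢ, wᵢ` and `p + q = 1`,
`p B u₁ w₁ + q B u₂ w₂ = B ū w̄ + p q B (u₁ - u₂) (w₁ - w₂)` and
`1 - B ū ū = p q B (u₁ - u₂) (u₁ - u₂)`, so Cauchy–Schwarz gives `p B u₁ w₁ + q B u₂ w₂ ≤ F(ū, w̄)`.
A two-dimensional Cauchy–Schwarz then bounds `F(ū, w̄)`, computed for `B ⊕ (· * ·)`, by `F` of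
the mixtures in `M`.
-/

open LinearMap (BilinForm)

lemma mul_add_sqrt_mul_sqrt_le {a b A C : ℝ} (ha : a * a ≤ A) (hb : b * b ≤ C) :
    a * b + √(A - a * a) * √(C - b * b) ≤ √A * √C := by
  have hs := Real.mul_self_sqrt (sub_nonneg.2 ha)
  have ht := Real.mul_self_sqrt (sub_nonneg.2 hb)
  rw [← Real.sqrt_mul ((mul_self_nonneg a).trans ha)]
  refine (le_abs_self _).trans (Real.abs_le_sqrt ?_)
  nlinarith [sq_nonneg (a * √(C - b * b) - b * √(A - a * a))]

namespace LinearMap.BilinForm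

variable {M : Type*} [AddCommGroup M] [Module ℝ M] (B : BilinForm ℝ M)

noncomputable def fidelityN (x y : M) : ℝ := B x y + √(1 - B x x) * √(1 - B y y)

lemma mul_apply_add_mul_apply {p q : ℝ} (hpq : p + q = 1) (x₁ x₂ y₁ y₂ : M) :
    p * B x₁ y₁ + q * B x₂ y₂ =
      B (p • x₁ + q • x₂) (p • y₁ + q • y₂) + p * q * B (x₁ - x₂) (y₁ - y₂) := by
  simp only [map_add, map_sub, map_smul, LinearMap.add_apply, LinearMap.sub_apply,
    LinearMap.smul_apply, smul_eq_mul]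
  linear_combination (-(p * B x₁ y₁ + q * B x₂ y₂)) * hpq

variable {B}

lemma apply_le_sqrt_mul_sqrt (hs : ∀ x, 0 ≤ B x x) (hB : LinearMap.IsSymm B) (x y : M) :
    B x y ≤ √(B x x) * √(B y y) := by
  rw [← Real.sqrt_mul (hs x)]
  exact (le_abs_self _).trans (Real.abs_le_sqrt (B.apply_sq_le_of_symm hs hB x y))

lemma one_sub_apply_convexComb_self {p q : ℝ} (hpq : p + q = 1) {u₁ u₂ : M}
    (hu₁ : B u₁ u₁ = 1) (hu₂ : B u₂ u₂ = 1) :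
    1 - B (p • u₁ + q • u₂) (p • u₁ + q • u₂) = p * q * B (u₁ - u₂) (u₁ - u₂) := by
  have := B.mul_apply_add_mul_apply hpq u₁ u₂ u₁ u₂
  rw [hu₁, hu₂] at this
  linear_combination this - hpq

lemma apply_convexComb_self_le_one (hs : ∀ x, 0 ≤ B x x) {p q : ℝ} (hp : 0 ≤ p) (hq : 0 ≤ q)
    (hpq : p + q = 1) {u₁ u₂ : M} (hu₁ : B u₁ u₁ = 1) (hu₂ : B u₂ u₂ = 1) :
    B (p • u₁ + q • u₂) (p • u₁ + q • u₂) ≤ 1 := by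
  have := one_sub_apply_convexComb_self hpq hu₁ hu₂
  nlinarith [mul_nonneg (mul_nonneg hp hq) (hs (u₁ - u₂))]

theorem mul_apply_add_mul_apply_le_fidelityN (hs : ∀ x, 0 ≤ B x x) (hB : LinearMap.IsSymm B)
    {u₁ u₂ w₁ w₂ : M} (hu₁ : B u₁ u₁ = 1) (hu₂ : B u₂ u₂ = 1) (hw₁ : B w₁ w₁ = 1)
    (hw₂ : B w₂ w₂ = 1) {p q : ℝ} (hp : 0 ≤ p) (hq : 0 ≤ q) (hpq : p + q = 1) :
    p * B u₁ w₁ + q * B u₂ w₂ ≤ B.fidelityN (p • u₁ + q • u₂) (p • w₁ + q • w₂) := by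
  have hpq' := mul_nonneg hp hq
  rw [B.mul_apply_add_mul_apply hpq, fidelityN, one_sub_apply_convexComb_self hpq hu₁ hu₂,
    one_sub_apply_convexComb_self hpq hw₁ hw₂, Real.sqrt_mul hpq', Real.sqrt_mul hpq']
  calc _ ≤ B (p • u₁ + q • u₂) (p • w₁ + q • w₂)
        + p * q * (√(B (u₁ - u₂) (u₁ - u₂)) * √(B (w₁ - w₂) (w₁ - w₂))) := by
        gcongr; exact apply_le_sqrt_mul_sqrt hs hB _ _
    _ = _ := by
        linear_combination (-(√(B (u₁ - u₂) (u₁ - u₂)) * √(B (w₁ - w₂) (w₁ - w₂)))) *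
          Real.mul_self_sqrt hpq'

variable (B) in
noncomputable def prodMul : BilinForm ℝ (M × ℝ) :=
  B.compl₁₂ (LinearMap.fst ℝ M ℝ) (LinearMap.fst ℝ M ℝ) +
    (LinearMap.mul ℝ ℝ).compl₁₂ (LinearMap.snd ℝ M ℝ) (LinearMap.snd ℝ M ℝ)

@[simp] lemma prodMul_apply (u w : M × ℝ) : B.prodMul u w = B u.1 w.1 + u.2 * w.2 := rfl

lemma prodMul_self_nonneg (hs : ∀ x, 0 ≤ B x x) (u : M × ℝ) : 0 ≤ B.prodMul u u := by
  rw [prodMul_apply]; nlinarith [hs u.1]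

lemma isSymm_prodMul (hB : LinearMap.IsSymm B) : LinearMap.IsSymm B.prodMul :=
  LinearMap.isSymm_def.2 fun u w => by
    simp only [prodMul_apply, RingHom.id_apply, ← LinearMap.isSymm_def.1 hB u.1 w.1, mul_comm]

lemma fidelityN_prodMul_le {u w : M × ℝ} (hu : B.prodMul u u ≤ 1) (hw : B.prodMul w w ≤ 1) :
    B.prodMul.fidelityN u w ≤ B.fidelityN u.1 w.1 := by
  rw [prodMul_apply] at hu hw
  have := mul_add_sqrt_mul_sqrt_le (a := u.2) (b := w.2) (A := 1 - B u.1 u.1)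
    (C := 1 - B w.1 w.1) (by linarith) (by linarith)
  simp only [fidelityN, prodMul_apply, sub_add_eq_sub_sub]
  linarith

lemma prodMul_lift_self {x : M} (hx : B x x ≤ 1) :
    B.prodMul (x, √(1 - B x x)) (x, √(1 - B x x)) = 1 := by
  rw [prodMul_apply, Real.mul_self_sqrt (sub_nonneg.2 hx)]; ring

theorem fidelityN_concave (hs : ∀ x, 0 ≤ B x x) (hB : LinearMap.IsSymm B) {x₁ x₂ y₁ y₂ : M}
    (hx₁ : B x₁ x₁ ≤ 1) (hx₂ : B x₂ x₂ ≤ 1) (hy₁ : B y₁ y₁ ≤ 1) (hy₂ : B y₂ y₂ ≤ 1)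
    {p q : ℝ} (hp : 0 ≤ p) (hq : 0 ≤ q) (hpq : p + q = 1) :
    p * B.fidelityN x₁ y₁ + q * B.fidelityN x₂ y₂ ≤
      B.fidelityN (p • x₁ + q • x₂) (p • y₁ + q • y₂) := by
  set lift : M → M × ℝ := fun x => (x, √(1 - B x x))
  have hconv {x₁ x₂ : M} (hx₁ : B x₁ x₁ ≤ 1) (hx₂ : B x₂ x₂ ≤ 1) :
      B.prodMul (p • lift x₁ + q • lift x₂) (p • lift x₁ + q • lift x₂) ≤ 1 :=
    apply_convexComb_self_le_one (prodMul_self_nonneg hs) hp hq hpq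
      (prodMul_lift_self hx₁) (prodMul_lift_self hx₂)
  calc p * B.fidelityN x₁ y₁ + q * B.fidelityN x₂ y₂
      = p * B.prodMul (lift x₁) (lift y₁) + q * B.prodMul (lift x₂) (lift y₂) := rfl
    _ ≤ B.prodMul.fidelityN (p • lift x₁ + q • lift x₂) (p • lift y₁ + q • lift y₂) :=
      mul_apply_add_mul_apply_le_fidelityN (prodMul_self_nonneg hs) (isSymm_prodMul hB)
        (prodMul_lift_self hx₁) (prodMul_lift_self hx₂) (prodMul_lift_self hy₁)
        (prodMul_lift_self hy₂) hp hq hpq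
    _ ≤ B.fidelityN (p • x₁ + q • x₂) (p • y₁ + q • y₂) :=
      fidelityN_prodMul_le (hconv hx₁ hx₂) (hconv hy₁ hy₂)

end LinearMap.BilinForm

namespace Matrix

variable {n : Type*} [Fintype n]

noncomputable def realFrobeniusForm : BilinForm ℝ (Matrix n n ℂ) :=
  LinearMap.mk₂ ℝ (fun A C => (Aᴴ * C).trace.re)
    (fun A A' C => by simp [Matrix.add_mul])
    (fun r A C => by simp)
    (fun A C C' => by simp [Matrix.mul_add])
    (fun r A C => by simp)

lemma realFrobeniusForm_apply (A C : Matrix n n ℂ) :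
    realFrobeniusForm A C = (Aᴴ * C).trace.re := rfl

lemma realFrobeniusForm_self_nonneg (A : Matrix n n ℂ) : 0 ≤ realFrobeniusForm A A :=
  (Complex.nonneg_iff.1 (posSemidef_conjTranspose_mul_self A).trace_nonneg).1

lemma isSymm_realFrobeniusForm : LinearMap.IsSymm (realFrobeniusForm (n := n)) :=
  LinearMap.isSymm_def.2 fun A C => by
    rw [RingHom.id_apply, realFrobeniusForm_apply, realFrobeniusForm_apply,
      ← conjTranspose_conjTranspose C, ← conjTranspose_mul, trace_conjTranspose,
      conjTranspose_conjTranspose, Complex.star_def, Complex.conj_re]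

lemma IsHermitian.trace_mul_self [DecidableEq n] {A : Matrix n n ℂ} (hA : A.IsHermitian) :
    (A * A).trace = ∑ i, ((hA.eigenvalues i ^ 2 : ℝ) : ℂ) := by
  conv_lhs => rw [hA.spectral_theorem, ← map_mul, Unitary.conjStarAlgAut_apply, trace_mul_cycle,
    Unitary.coe_star_mul_self, one_mul, diagonal_mul_diagonal, trace_diagonal]
  simp [sq]

end Matrix

lemma IsDensity.realFrobeniusForm_self_le_one {n : Type*} [Fintype n] [DecidableEq n]
    {ρ : Matrix n n ℂ} (hρ : IsDensity ρ) : realFrobeniusForm ρ ρ ≤ 1 := by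
  obtain ⟨hpsd, htr⟩ := hρ
  have hsum : ∑ i, hpsd.1.eigenvalues i = 1 := by
    simpa [Complex.re_sum] using
      congrArg Complex.re (hpsd.1.trace_eq_sum_eigenvalues.symm.trans htr)
  rw [realFrobeniusForm_apply, hpsd.1.eq, hpsd.1.trace_mul_self, Complex.re_sum]
  simp only [Complex.ofReal_re]
  calc ∑ i, hpsd.1.eigenvalues i ^ 2 ≤ (∑ i, hpsd.1.eigenvalues i) ^ 2 :=
        Finset.sum_sq_le_sq_sum_of_nonneg fun i _ => hpsd.eigenvalues_nonneg i
    _ = 1 := by rw [hsum, one_pow]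

lemma FN_eq_fidelityN {n : Type*} [Fintype n] {ρ σ : Matrix n n ℂ} (hρ : ρ.IsHermitian)
    (hσ : σ.IsHermitian) : FN ρ σ = realFrobeniusForm.fidelityN ρ σ := by
  simp only [FN, BilinForm.fidelityN, realFrobeniusForm_apply, hρ.eq, hσ.eq]

theorem stmt_1 {n : Type*} [Fintype n] [DecidableEq n]
    (ρ₁ ρ₂ σ₁ σ₂ : Matrix n n ℂ)
    (hρ₁ : IsDensity ρ₁) (hρ₂ : IsDensity ρ₂)
    (hσ₁ : IsDensity σ₁) (hσ₂ : IsDensity σ₂)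
    (p₁ p₂ : ℝ) (hp₁ : 0 ≤ p₁) (hp₂ : 0 ≤ p₂) (hp : p₁ + p₂ = 1) :
    p₁ * FN ρ₁ σ₁ + p₂ * FN ρ₂ σ₂ ≤
      FN ((p₁ : ℂ) • ρ₁ + (p₂ : ℂ) • ρ₂) ((p₁ : ℂ) • σ₁ + (p₂ : ℂ) • σ₂) := by
  have mix_isHermitian {A C : Matrix n n ℂ} (hA : A.IsHermitian) (hC : C.IsHermitian) :
      (p₁ • A + p₂ • C).IsHermitian :=
    (hA.smul (.all p₁)).add (hC.smul (.all p₂))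
  simp only [Complex.coe_smul]
  rw [FN_eq_fidelityN hρ₁.1.1 hσ₁.1.1, FN_eq_fidelityN hρ₂.1.1 hσ₂.1.1,
    FN_eq_fidelityN (mix_isHermitian hρ₁.1.1 hρ₂.1.1) (mix_isHermitian hσ₁.1.1 hσ₂.1.1)]
  exact BilinForm.fidelityN_concave realFrobeniusForm_self_nonneg isSymm_realFrobeniusForm
    hρ₁.realFrobeniusForm_self_le_one hρ₂.realFrobeniusForm_self_le_one
    hσ₁.realFrobeniusForm_self_le_one hσ₂.realFrobeniusForm_self_le_one hp₁ hp₂ hp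
end

section
/- F_N is super-multiplicative under tensor products: for density matrices ρ₁, ρ₂, σ₁, σ₂, F_N(ρ₁⊗ρ₂, σ₁⊗σ₂) ≥ F_N(ρ₁,σ₁)·F_N(ρ₂,σ₂). -/
open Matrix BigOperators ComplexOrder

/-!
Write `xᵢ = tr ρᵢ²`, `yᵢ = tr σᵢ²` (purities, in `[0, 1]`) and `aᵢ = tr ρᵢσᵢ`. Traces are
multiplicative under `⊗ₖ`, so the claim is the real inequality
`(a₁ + √(1-x₁)√(1-y₁)) (a₂ + √(1-x₂)√(1-y₂)) ≤ a₁a₂ + √(1-x₁x₂)√(1-y₁y₂)`.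
Bounding `aᵢ ≤ √xᵢ √yᵢ` (Cauchy–Schwarz for the Hilbert–Schmidt inner product), the three
cross terms of the expansion become the inner product of two vectors of `ℝ³` whose squared
norms are `x₁(1-x₂) + x₂(1-x₁) + (1-x₁)(1-x₂) = 1 - x₁x₂` and `1 - y₁y₂`; Cauchy–Schwarz in
`ℝ³` concludes.
-/

lemma sq_add_sq_add_sq_eq_one_sub_mul {s t : ℝ} (hs : s ∈ Set.Icc 0 1) (ht : t ∈ Set.Icc 0 1) :
    (√s * √(1 - t)) ^ 2 + (√t * √(1 - s)) ^ 2 + (√(1 - s) * √(1 - t)) ^ 2 = 1 - s * t := by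
  simp only [mul_pow, Real.sq_sqrt hs.1, Real.sq_sqrt ht.1, Real.sq_sqrt (sub_nonneg.2 hs.2),
    Real.sq_sqrt (sub_nonneg.2 ht.2)]
  ring

lemma add_sqrt_mul_sqrt_mul_le {x₁ x₂ y₁ y₂ a b : ℝ}
    (hx₁ : x₁ ∈ Set.Icc 0 1) (hx₂ : x₂ ∈ Set.Icc 0 1)
    (hy₁ : y₁ ∈ Set.Icc 0 1) (hy₂ : y₂ ∈ Set.Icc 0 1)
    (ha : a ≤ √x₁ * √y₁) (hb : b ≤ √x₂ * √y₂) :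
    (a + √(1 - x₁) * √(1 - y₁)) * (b + √(1 - x₂) * √(1 - y₂)) ≤
      a * b + √(1 - x₁ * x₂) * √(1 - y₁ * y₂) := by
  have hcs := Real.sum_mul_le_sqrt_mul_sqrt Finset.univ
    ![√x₁ * √(1 - x₂), √x₂ * √(1 - x₁), √(1 - x₁) * √(1 - x₂)]
    ![√y₁ * √(1 - y₂), √y₂ * √(1 - y₁), √(1 - y₁) * √(1 - y₂)]
  simp only [Fin.sum_univ_three, Matrix.cons_val_zero, Matrix.cons_val_one, Matrix.cons_val_two,
    Matrix.head_cons, Matrix.tail_cons, sq_add_sq_add_sq_eq_one_sub_mul hx₁ hx₂,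
    sq_add_sq_add_sq_eq_one_sub_mul hy₁ hy₂] at hcs
  calc (a + √(1 - x₁) * √(1 - y₁)) * (b + √(1 - x₂) * √(1 - y₂))
      = a * b + a * (√(1 - x₂) * √(1 - y₂)) + √(1 - x₁) * √(1 - y₁) * b
          + √(1 - x₁) * √(1 - y₁) * (√(1 - x₂) * √(1 - y₂)) := by ring
    _ ≤ a * b + √x₁ * √y₁ * (√(1 - x₂) * √(1 - y₂)) + √(1 - x₁) * √(1 - y₁) * (√x₂ * √y₂)
          + √(1 - x₁) * √(1 - y₁) * (√(1 - x₂) * √(1 - y₂)) := by gcongr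
    _ ≤ a * b + √(1 - x₁ * x₂) * √(1 - y₁ * y₂) := by linarith

namespace Matrix

variable {n m 𝕜 : Type*} [Fintype n] [Fintype m] [RCLike 𝕜]

lemma IsHermitian.re_trace_mul_le {A B : Matrix n n 𝕜} (hA : A.IsHermitian)
    (hB : B.IsHermitian) :
    RCLike.re (A * B).trace ≤ √(RCLike.re (A * A).trace) * √(RCLike.re (B * B).trace) := by
  classical
  -- the Hilbert–Schmidt inner product `⟪X, Y⟫ = tr (Y Xᴴ)`
  let _ := (1 : Matrix n n 𝕜).toMatrixSeminormedAddCommGroup PosSemidef.one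
  let _ := (1 : Matrix n n 𝕜).toMatrixInnerProductSpace PosSemidef.one
  have h := re_inner_le_norm (𝕜 := 𝕜) A B
  rw [norm_eq_sqrt_re_inner (𝕜 := 𝕜), norm_eq_sqrt_re_inner (𝕜 := 𝕜)] at h
  change RCLike.re (B * 1 * Aᴴ).trace ≤
    √(RCLike.re (A * 1 * Aᴴ).trace) * √(RCLike.re (B * 1 * Bᴴ).trace) at h
  simp only [hA.eq, hB.eq, Matrix.mul_one] at h
  rwa [trace_mul_comm] at h

lemma IsHermitian.trace_mul_self_eq_sum_eigenvalues_sq [DecidableEq n] {A : Matrix n n 𝕜}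
    (hA : A.IsHermitian) :
    (A * A).trace = ∑ i, (hA.eigenvalues i : 𝕜) ^ 2 := by
  conv_lhs => rw [hA.spectral_theorem, ← map_mul, Unitary.conjStarAlgAut_apply, trace_mul_cycle,
    Unitary.coe_star_mul_self, one_mul, diagonal_mul_diagonal, trace_diagonal]
  simp [sq]

lemma IsHermitian.re_trace_mul_self_nonneg {A : Matrix n n 𝕜} (hA : A.IsHermitian) :
    0 ≤ RCLike.re (A * A).trace := by
  classical
  rw [hA.trace_mul_self_eq_sum_eigenvalues_sq]
  simp only [← RCLike.ofReal_pow, ← RCLike.ofReal_sum, RCLike.ofReal_re]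
  positivity

lemma PosSemidef.re_trace_mul_self_le {A : Matrix n n 𝕜} (hA : A.PosSemidef) :
    RCLike.re (A * A).trace ≤ RCLike.re A.trace ^ 2 := by
  classical
  rw [hA.isHermitian.trace_mul_self_eq_sum_eigenvalues_sq,
    hA.isHermitian.trace_eq_sum_eigenvalues]
  simp only [← RCLike.ofReal_pow, ← RCLike.ofReal_sum, RCLike.ofReal_re]
  exact Finset.sum_sq_le_sq_sum_of_nonneg fun i _ ↦ hA.eigenvalues_nonneg i

lemma IsHermitian.im_trace_mul_eq_zero {A B : Matrix n n 𝕜} (hA : A.IsHermitian)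
    (hB : B.IsHermitian) : RCLike.im (A * B).trace = 0 := by
  have h : star (A * B).trace = (A * B).trace := by
    rw [← trace_conjTranspose, conjTranspose_mul, hA.eq, hB.eq, trace_mul_comm]
  exact RCLike.conj_eq_iff_im.mp h

open Kronecker in
lemma IsHermitian.re_trace_kronecker_mul_kronecker {A C : Matrix n n 𝕜} {B D : Matrix m m 𝕜}
    (hA : A.IsHermitian) (hC : C.IsHermitian) (hB : B.IsHermitian) (hD : D.IsHermitian) :
    RCLike.re ((A ⊗ₖ B) * (C ⊗ₖ D)).trace =
      RCLike.re (A * C).trace * RCLike.re (B * D).trace := by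
  rw [← mul_kronecker_mul, trace_kronecker, RCLike.mul_re, hA.im_trace_mul_eq_zero hC,
    hB.im_trace_mul_eq_zero hD, mul_zero, sub_zero]

end Matrix

lemma IsDensity.re_trace_mul_self_mem_Icc {n : Type*} [Fintype n] {ρ : Matrix n n ℂ}
    (hρ : IsDensity ρ) : (ρ * ρ).trace.re ∈ Set.Icc 0 1 :=
  ⟨hρ.1.isHermitian.re_trace_mul_self_nonneg, by simpa [hρ.2] using hρ.1.re_trace_mul_self_le⟩

open Kronecker in
theorem stmt_2_general {n m : Type*} [Fintype n] [Fintype m]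
    (ρ₁ σ₁ : Matrix n n ℂ) (ρ₂ σ₂ : Matrix m m ℂ)
    (hρ₁ : IsDensity ρ₁) (hσ₁ : IsDensity σ₁)
    (hρ₂ : IsDensity ρ₂) (hσ₂ : IsDensity σ₂) :
    FN ρ₁ σ₁ * FN ρ₂ σ₂ ≤ FN (ρ₁ ⊗ₖ ρ₂) (σ₁ ⊗ₖ σ₂) := by
  have hρ₁' := hρ₁.1.isHermitian
  have hσ₁' := hσ₁.1.isHermitian
  have hρ₂' := hρ₂.1.isHermitian
  have hσ₂' := hσ₂.1.isHermitian
  simp only [FN, ← RCLike.re_to_complex]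
  rw [hρ₁'.re_trace_kronecker_mul_kronecker hσ₁' hρ₂' hσ₂',
    hρ₁'.re_trace_kronecker_mul_kronecker hρ₁' hρ₂' hρ₂',
    hσ₁'.re_trace_kronecker_mul_kronecker hσ₁' hσ₂' hσ₂']
  exact add_sqrt_mul_sqrt_mul_le hρ₁.re_trace_mul_self_mem_Icc hρ₂.re_trace_mul_self_mem_Icc
    hσ₁.re_trace_mul_self_mem_Icc hσ₂.re_trace_mul_self_mem_Icc
    (hρ₁'.re_trace_mul_le hσ₁') (hρ₂'.re_trace_mul_le hσ₂')

open Kronecker in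
theorem stmt_2 {n m : Type*} [Fintype n] [Fintype m] [DecidableEq n] [DecidableEq m]
    (ρ₁ σ₁ : Matrix n n ℂ) (ρ₂ σ₂ : Matrix m m ℂ)
    (hρ₁ : IsDensity ρ₁) (hσ₁ : IsDensity σ₁)
    (hρ₂ : IsDensity ρ₂) (hσ₂ : IsDensity σ₂) :
    FN ρ₁ σ₁ * FN ρ₂ σ₂ ≤ FN (ρ₁ ⊗ₖ ρ₂) (σ₁ ⊗ₖ σ₂) :=
  stmt_2_general ρ₁ σ₁ ρ₂ σ₂ hρ₁ hσ₁ hρ₂ hσ₂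
end

section
/- For real numbers a, b, c, d with 0 ≤ a,b,c,d ≤ 1, the inequality √((1−ab)(1−cd)) ≥ √((1−a)(1−b)(1−c)(1−d)) + √(ac(1−b)(1−d)) + √(bd(1−a)(1−c)) holds. -/
/-
Split 1 - ab = (1-a)(1-b) + a(1-b) + b(1-a) and 1 - cd = (1-c)(1-d) + c(1-d) + d(1-c) into
nonnegative parts. The three square roots on the right are √(xᵢyᵢ) for the matching parts xᵢ, yᵢ,
so the inequality is Cauchy–Schwarz ∑ √xᵢ √yᵢ ≤ √(∑ xᵢ) √(∑ yᵢ) for three terms.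
-/

namespace Real

theorem sqrt_mul_add_sqrt_mul_add_sqrt_mul_le {x₁ x₂ x₃ y₁ y₂ y₃ : ℝ}
    (hx₁ : 0 ≤ x₁) (hx₂ : 0 ≤ x₂) (hx₃ : 0 ≤ x₃) (hy₁ : 0 ≤ y₁) (hy₂ : 0 ≤ y₂) (hy₃ : 0 ≤ y₃) :
    √(x₁ * y₁) + √(x₂ * y₂) + √(x₃ * y₃) ≤ √((x₁ + x₂ + x₃) * (y₁ + y₂ + y₃)) := by
  have hx : ∀ i, 0 ≤ ![x₁, x₂, x₃] i := by
    intro i; fin_cases i <;> assumption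
  have hy : ∀ i, 0 ≤ ![y₁, y₂, y₃] i := by
    intro i; fin_cases i <;> assumption
  have h := sum_sqrt_mul_sqrt_le Finset.univ hx hy
  simp only [Fin.sum_univ_three, Matrix.cons_val] at h
  rwa [sqrt_mul hx₁, sqrt_mul hx₂, sqrt_mul hx₃, sqrt_mul (by positivity)]

end Real

theorem stmt_3 (a b c d : ℝ)
    (ha : 0 ≤ a) (ha' : a ≤ 1) (hb : 0 ≤ b) (hb' : b ≤ 1)
    (hc : 0 ≤ c) (hc' : c ≤ 1) (hd : 0 ≤ d) (hd' : d ≤ 1) :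
    Real.sqrt ((1 - a * b) * (1 - c * d)) ≥
      Real.sqrt ((1 - a) * (1 - b) * (1 - c) * (1 - d))
        + Real.sqrt (a * c * (1 - b) * (1 - d))
        + Real.sqrt (b * d * (1 - a) * (1 - c)) := by
  have ha₁ : 0 ≤ 1 - a := by linarith
  have hb₁ : 0 ≤ 1 - b := by linarith
  have hc₁ : 0 ≤ 1 - c := by linarith
  have hd₁ : 0 ≤ 1 - d := by linarith
  have cauchy_schwarz := Real.sqrt_mul_add_sqrt_mul_add_sqrt_mul_le
    (mul_nonneg ha₁ hb₁) (mul_nonneg ha hb₁) (mul_nonneg hb ha₁)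
    (mul_nonneg hc₁ hd₁) (mul_nonneg hc hd₁) (mul_nonneg hd hc₁)
  rw [ge_iff_le, show 1 - a * b = (1 - a) * (1 - b) + a * (1 - b) + b * (1 - a) by ring,
    show 1 - c * d = (1 - c) * (1 - d) + c * (1 - d) + d * (1 - c) by ring]
  convert cauchy_schwarz using 3 <;> ring_nf
end

section
/- The function C[F_N](ρ,σ) := √(1 − F_N(ρ,σ)) is a metric on the set of density matrices: it is nonnegative, vanishes exactly when ρ = σ, is symmetric, and satisfies the triangle inequality. -/
open Matrix BigOperators ComplexOrder

/-- The candidate metric `C[F_N](ρ,σ) = √(1 − F_N(ρ,σ))`. -/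
noncomputable def CFN {n : Type*} [Fintype n] (ρ σ : Matrix n n ℂ) : ℝ :=
  Real.sqrt (1 - FN ρ σ)

/-!
`F_N(ρ, σ)` is the real part of the inner product of the vectors `(ρ, √(1 - tr ρ²))` and
`(σ, √(1 - tr σ²))` of `ℂ^(n×n) ⊕ ℂ`, which are unit vectors because `tr ρ² ≤ (tr ρ)² = 1`.
For unit vectors `‖x - y‖² = 2 - 2 Re⟪x, y⟫`, so `C[F_N]` is the Euclidean distance of these
vectors divided by `√2`, and the metric axioms follow from those of the norm.
-/

open RCLike in
theorem sqrt_one_sub_re_inner_eq_norm_sub_div_sqrt_two {𝕜 E : Type*} [RCLike 𝕜]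
    [NormedAddCommGroup E] [InnerProductSpace 𝕜 E] {x y : E} (hx : ‖x‖ = 1) (hy : ‖y‖ = 1) :
    √(1 - re (inner 𝕜 x y)) = ‖x - y‖ / √2 := by
  have h : 1 - re (inner 𝕜 x y) = ‖x - y‖ ^ 2 / 2 := by
    rw [@norm_sub_sq 𝕜, hx, hy]
    ring
  rw [h, Real.sqrt_div' _ (by norm_num), Real.sqrt_sq (norm_nonneg _)]

theorem Matrix.IsHermitian.trace_mul_self_s5 {n 𝕜 : Type*} [Fintype n] [DecidableEq n] [RCLike 𝕜]
    {A : Matrix n n 𝕜} (hA : A.IsHermitian) :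
    (A * A).trace = ((∑ i, hA.eigenvalues i ^ 2 : ℝ) : 𝕜) := by
  conv_lhs => rw [hA.spectral_theorem, ← map_mul, Unitary.conjStarAlgAut_apply, trace_mul_cycle,
    Unitary.coe_star_mul_self, Matrix.one_mul]
  simp [diagonal_mul_diagonal, trace_diagonal, sq]

theorem IsDensity.re_trace_mul_self_le_one {n : Type*} [Fintype n] [DecidableEq n]
    {ρ : Matrix n n ℂ} (hρ : IsDensity ρ) : (ρ * ρ).trace.re ≤ 1 := by
  obtain ⟨hpsd, htr⟩ := hρ
  have hsum : ∑ i, hpsd.1.eigenvalues i = 1 := by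
    simpa [htr] using (congrArg Complex.re hpsd.1.trace_eq_sum_eigenvalues).symm
  rw [hpsd.1.trace_mul_self_s5, ← RCLike.re_to_complex, RCLike.ofReal_re]
  calc ∑ i, hpsd.1.eigenvalues i ^ 2
      ≤ (∑ i, hpsd.1.eigenvalues i) ^ 2 :=
        Finset.sum_sq_le_sq_sum_of_nonneg fun i _ => hpsd.eigenvalues_nonneg i
    _ = 1 := by rw [hsum, one_pow]

section DensityEmbedding

variable {n : Type*} [Fintype n]

noncomputable def densityEmbedding (ρ : Matrix n n ℂ) : EuclideanSpace ℂ (Option (n × n)) :=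
  WithLp.toLp 2 fun
    | none => (√(1 - (ρ * ρ).trace.re) : ℂ)
    | some (i, j) => ρ i j

theorem densityEmbedding_injective : Function.Injective (densityEmbedding (n := n)) :=
  fun _ _ h => Matrix.ext fun i j => congrArg (· (some (i, j))) h

theorem re_inner_densityEmbedding {ρ : Matrix n n ℂ} (hρ : ρ.IsHermitian) (σ : Matrix n n ℂ) :
    (inner ℂ (densityEmbedding ρ) (densityEmbedding σ)).re = FN ρ σ := by
  have htrace : (ρ * σ).trace = ∑ i, ∑ j, star (ρ i j) * σ i j := by
    conv_lhs => rw [← hρ.eq]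
    simp only [Matrix.trace, diag_apply, mul_apply, conjTranspose_apply]
    exact Finset.sum_comm
  simp [densityEmbedding, FN, PiLp.inner_apply, Fintype.sum_option, Fintype.sum_prod_type,
    htrace, Complex.re_sum, add_comm, mul_comm]

variable [DecidableEq n]

theorem norm_densityEmbedding {ρ : Matrix n n ℂ} (hρ : IsDensity ρ) :
    ‖densityEmbedding ρ‖ = 1 := by
  rw [@norm_eq_sqrt_re_inner ℂ, RCLike.re_to_complex, re_inner_densityEmbedding hρ.1.1, FN,
    Real.mul_self_sqrt (by linarith [hρ.re_trace_mul_self_le_one]), add_sub_cancel,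
    Real.sqrt_one]

theorem CFN_eq_norm_sub_div_sqrt_two {ρ σ : Matrix n n ℂ} (hρ : IsDensity ρ)
    (hσ : IsDensity σ) :
    CFN ρ σ = ‖densityEmbedding ρ - densityEmbedding σ‖ / √2 := by
  rw [← sqrt_one_sub_re_inner_eq_norm_sub_div_sqrt_two (𝕜 := ℂ) (norm_densityEmbedding hρ)
    (norm_densityEmbedding hσ), RCLike.re_to_complex, re_inner_densityEmbedding hρ.1.1, CFN]

end DensityEmbedding

theorem stmt_5 {n : Type*} [Fintype n] [DecidableEq n] :
    (∀ ρ σ : Matrix n n ℂ, IsDensity ρ → IsDensity σ → 0 ≤ CFN ρ σ) ∧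
    (∀ ρ σ : Matrix n n ℂ, IsDensity ρ → IsDensity σ → (CFN ρ σ = 0 ↔ ρ = σ)) ∧
    (∀ ρ σ : Matrix n n ℂ, IsDensity ρ → IsDensity σ → CFN ρ σ = CFN σ ρ) ∧
    (∀ ρ σ τ : Matrix n n ℂ, IsDensity ρ → IsDensity σ → IsDensity τ →
      CFN ρ τ ≤ CFN ρ σ + CFN σ τ) := by
  refine ⟨fun ρ σ _ _ => Real.sqrt_nonneg _, fun ρ σ hρ hσ => ?_, fun ρ σ hρ hσ => ?_,
    fun ρ σ τ hρ hσ hτ => ?_⟩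
  · rw [CFN_eq_norm_sub_div_sqrt_two hρ hσ, div_eq_zero_iff, norm_sub_eq_zero_iff,
      densityEmbedding_injective.eq_iff]
    simp
  · rw [CFN_eq_norm_sub_div_sqrt_two hρ hσ, CFN_eq_norm_sub_div_sqrt_two hσ hρ, norm_sub_rev]
  · rw [CFN_eq_norm_sub_div_sqrt_two hρ hτ, CFN_eq_norm_sub_div_sqrt_two hρ hσ,
      CFN_eq_norm_sub_div_sqrt_two hσ hτ, ← add_div]
    gcongr
    exact norm_sub_le_norm_sub_add_norm_sub _ _ _
end

section
/- Bloch vector difference dominates the cross product: if r₁ and r₂ are vectors in ℝ³ with ‖r₁‖ ≤ 1, ‖r₂‖ ≤ 1 and r₁ ≠ r₂, then ‖r₁ − r₂‖² > ‖r₁ × r₂‖². -/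
open Matrix WithLp
open scoped RealInnerProductSpace

lemma norm_toLp_crossProduct_sq (a b : EuclideanSpace ℝ (Fin 3)) :
    ‖toLp 2 (ofLp a ⨯₃ ofLp b)‖ ^ 2 = ‖a‖ ^ 2 * ‖b‖ ^ 2 - ⟪a, b⟫ ^ 2 := by
  simp_rw [norm_sq_eq_re_inner (𝕜 := ℝ), EuclideanSpace.inner_eq_star_dotProduct, star_trivial,
    RCLike.re_to_real, cross_dot_cross, dotProduct_comm (ofLp b) (ofLp a), sq]

/- With `D = a - 2t + b` the gap is `(1 - t)² - (1 - a)(1 - b)`, and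
`1 - t = (2 - a - b)/2 + D/2 > (2 - a - b)/2 ≥ √((1 - a)(1 - b))` by AM-GM. -/
lemma mul_sub_sq_lt_sub_two_mul_add {a b t : ℝ} (ha : a ≤ 1) (hb : b ≤ 1)
    (hD : 0 < a - 2 * t + b) : a * b - t ^ 2 < a - 2 * t + b := by
  nlinarith [sq_nonneg (a - b)]

theorem stmt_18 (r₁ r₂ : EuclideanSpace ℝ (Fin 3))
    (h₁ : ‖r₁‖ ≤ 1) (h₂ : ‖r₂‖ ≤ 1) (hne : r₁ ≠ r₂) :
    ‖r₁ - r₂‖ ^ 2 >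
      ‖((WithLp.equiv 2 (Fin 3 → ℝ)).symm
          (crossProduct (WithLp.equiv 2 (Fin 3 → ℝ) r₁)
            (WithLp.equiv 2 (Fin 3 → ℝ) r₂)))‖ ^ 2 := by
  have hdist : 0 < ‖r₁ - r₂‖ ^ 2 := by positivity [sub_ne_zero.mpr hne]
  rw [norm_sub_sq_real] at hdist ⊢
  exact (norm_toLp_crossProduct_sq r₁ r₂).trans_lt <| mul_sub_sq_lt_sub_two_mul_add
    (pow_le_one₀ (norm_nonneg _) h₁) (pow_le_one₀ (norm_nonneg _) h₂) hdist
end
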